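/- arXiv:1412.8571 — 3 statements merged into one kernel-verified Lean document; each statement's English description precedes it below -/
import Mathlib

section
/- Let n ≥ 3 be odd and let A ∈ M_2(ℝ) satisfy A^n = I and A ≠ I. Then A^(n-1) + A^(n-2) + ... + A + I = 0. -/
open Matrix

lemma aux_pow_one_add (N : Matrix (Fin 2) (Fin 2) ℝ) (hN : N * N = 0) (k : ℕ) :
    (1 + N) ^ k = 1 + (k : ℝ) • N := by
  induction k with
  | zero => simp
  | succ k ih =>
    rw [pow_succ, ih]
    push_cast
    rw [add_smul, one_smul]
    rw [mul_add, mul_one, add_mul, one_mul, Matrix.smul_mul, hN, smul_zero]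
    abel

theorem stmt_4 (n : ℕ) (hn : 3 ≤ n) (hodd : Odd n)
    (A : Matrix (Fin 2) (Fin 2) ℝ) (h : A ^ n = 1) (hne : A ≠ 1) :
    ∑ j ∈ Finset.range n, A ^ j = 0 := by
  have hdet1 : A.det = 1 := by
    have : A.det ^ n = (1 : ℝ) ^ n := by
      rw [← Matrix.det_pow, h, one_pow, Matrix.det_one]
    exact hodd.strictMono_pow.injective this
  by_cases hu : IsUnit (A - 1).det
  · have hg : (∑ j ∈ Finset.range n, A ^ j) * (A - 1) = 0 := by
      rw [geom_sum_mul, h, sub_self]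
    calc ∑ j ∈ Finset.range n, A ^ j
        = (∑ j ∈ Finset.range n, A ^ j) * ((A - 1) * (A - 1)⁻¹) := by
          rw [Matrix.mul_nonsing_inv _ hu, mul_one]
      _ = 0 := by rw [← mul_assoc, hg, zero_mul]
  · exfalso
    have hd0 : (A - 1).det = 0 := by
      by_contra h'; exact hu (isUnit_iff_ne_zero.mpr h')
    -- compute trace = 2
    have htr : A.trace = 2 := by
      have e1 : (A - 1).det = (A 0 0 - 1) * (A 1 1 - 1) - A 0 1 * A 1 0 := by
        rw [Matrix.det_fin_two]; simp
      have e2 : A.det = A 0 0 * A 1 1 - A 0 1 * A 1 0 := Matrix.det_fin_two A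
      have e3 : A.trace = A 0 0 + A 1 1 := Matrix.trace_fin_two A
      rw [e1] at hd0; rw [e2] at hdet1; rw [e3]
      nlinarith
    -- Cayley-Hamilton for 2x2: A^2 - t A + d = 0, so (A-1)^2 = 0
    have hCH : A * A - A.trace • A + A.det • 1 = 0 := by
      rw [Matrix.trace_fin_two, Matrix.det_fin_two]
      ext i j
      fin_cases i <;> fin_cases j <;>
        simp [Matrix.mul_apply, Fin.sum_univ_two, Matrix.one_apply] <;> ring
    have hN : (A - 1) * (A - 1) = 0 := by
      have := hCH
      rw [htr, hdet1, one_smul] at this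
      have h2 : (2 : ℝ) • A = A + A := by
        rw [two_smul]
      rw [h2] at this
      calc (A - 1) * (A - 1) = A * A - (A + A) + 1 := by noncomm_ring
        _ = 0 := this
    have hAeq : A = 1 + (A - 1) := by abel
    have := aux_pow_one_add (A - 1) hN n
    rw [← hAeq, h] at this
    have hz : (n : ℝ) • (A - 1) = 0 := by
      have := this.symm
      rwa [add_eq_left] at this
    have hn0 : (n : ℝ) ≠ 0 := by positivity
    have : A - 1 = 0 := by
      rcases smul_eq_zero.mp hz with h' | h'
      · exact absurd h' hn0
      · exact h'
    exact hne (by linear_combination (norm := noncomm_ring) this)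
end

section
/- Let n ≥ 3 be odd and let A ∈ M_2(ℝ) satisfy A^n = −I and A ≠ −I. Then A^(n-1) − A^(n-2) + A^(n-3) − ... − A + I = 0. -/
/-!
Multiplying the alternating sum by `A + 1` telescopes to `A ^ n + 1 = 0`, so the sum vanishes as
soon as `A + 1` is invertible. If instead `B = A + 1` is singular, Cayley–Hamilton gives
`B * B = (tr B) • B`, so `A * B = (tr B - 1) • B`; then `A ^ n = -1` forces `(tr B - 1) ^ n = -1`
unless `B = 0`, hence `tr B = 0` and `B * B = 0`. But then `A ^ n = -(1 - B) ^ n = -1 + n • B`,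
so `B = 0` after all, i.e. `A = -1`.
-/

open Finset

theorem alternating_geom_sum_mul_add_one {K R : Type*} [CommRing K] [Ring R] [Algebra K R]
    (a : R) {n : ℕ} (hn : Odd n) :
    (∑ j ∈ range n, ((-1 : K) ^ j) • a ^ (n - 1 - j)) * (a + 1) = a ^ n + 1 := by
  have h := (Commute.one_left a).neg_left.geom_sum₂_mul n
  rw [hn.neg_one_pow, ← neg_add', ← neg_add', mul_neg, neg_inj, add_comm 1 a,
    add_comm 1 (a ^ n)] at h
  rw [← h]
  simp only [Algebra.smul_def, map_pow, map_neg, map_one]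

theorem Matrix.mul_self_eq_trace_smul_sub_det_smul_one {R : Type*} [CommRing R]
    (M : Matrix (Fin 2) (Fin 2) R) : M * M = M.trace • M - M.det • 1 := by
  ext i j
  fin_cases i <;> fin_cases j <;>
    simp [Matrix.mul_apply, Fin.sum_univ_two, Matrix.trace_fin_two, Matrix.det_fin_two] <;> ring

theorem pow_mul_eq_smul_of_mul_eq_smul {K R : Type*} [CommSemiring K] [Semiring R] [Algebra K R]
    {a b : R} {c : K} (h : a * b = c • b) (k : ℕ) : a ^ k * b = c ^ k • b := by
  induction k with
  | zero => simp
  | succ k ih => rw [pow_succ', mul_assoc, ih, mul_smul_comm, h, smul_smul, pow_succ]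

theorem one_add_pow_of_mul_self_eq_zero {R : Type*} [Semiring R] {b : R} (h : b * b = 0)
    (n : ℕ) : (1 + b) ^ n = 1 + n • b := by
  induction n with
  | zero => simp
  | succ n ih => rw [pow_succ, ih, add_mul, one_mul, mul_add, mul_one, smul_mul_assoc, h,
      smul_zero, add_zero, succ_nsmul', add_assoc]

theorem Matrix.eq_neg_one_of_pow_eq_neg_one_of_det_add_one_eq_zero {K : Type*} [Field K]
    [LinearOrder K] [IsStrictOrderedRing K] {n : ℕ} (hn : Odd n)
    {A : Matrix (Fin 2) (Fin 2) K} (h : A ^ n = -1) (hdet : (A + 1).det = 0) : A = -1 := by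
  set B := A + 1 with hB
  have hA : A = B - 1 := by rw [hB, add_sub_cancel_right]
  rw [hA, sub_eq_neg_self]
  by_contra hB0
  set c := B.trace
  have hBB : B * B = c • B := by
    rw [B.mul_self_eq_trace_smul_sub_det_smul_one, hdet, zero_smul, sub_zero]
  have hAB : A * B = (c - 1) • B := by rw [hA, sub_mul, hBB, one_mul, sub_smul, one_smul]
  have hc : c = 0 := by
    have hsmul : ((c - 1) ^ n + 1) • B = 0 := by
      rw [add_smul, ← pow_mul_eq_smul_of_mul_eq_smul hAB, h, one_smul, neg_one_mul, neg_add_cancel]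
    have hpow : (c - 1) ^ n = (-1) ^ n := by
      rw [hn.neg_one_pow, ← add_eq_zero_iff_eq_neg]
      exact (smul_eq_zero.1 hsmul).resolve_right hB0
    linarith [hn.pow_injective hpow]
  have hBB0 : -B * -B = 0 := by rw [neg_mul_neg, hBB, hc, zero_smul]
  have hnB : (n : K) • B = 0 := by
    rw [hA, ← neg_sub, sub_eq_add_neg, hn.neg_pow, one_add_pow_of_mul_self_eq_zero hBB0, neg_inj,
      add_eq_left, smul_neg, neg_eq_zero] at h
    rwa [Nat.cast_smul_eq_nsmul]
  exact hB0 ((smul_eq_zero.1 hnB).resolve_left (Nat.cast_ne_zero.2 hn.pos.ne'))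

theorem stmt_5_general (n : ℕ) (hodd : Odd n)
    (A : Matrix (Fin 2) (Fin 2) ℝ) (h : A ^ n = -1) (hne : A ≠ -1) :
    ∑ j ∈ Finset.range n, ((-1 : ℝ) ^ j) • A ^ (n - 1 - j) = 0 := by
  have key := alternating_geom_sum_mul_add_one (K := ℝ) A hodd
  rw [h, neg_add_cancel] at key
  have hunit : IsUnit (A + 1) := by
    rw [Matrix.isUnit_iff_isUnit_det, isUnit_iff_ne_zero]
    exact fun hdet => hne (Matrix.eq_neg_one_of_pow_eq_neg_one_of_det_add_one_eq_zero hodd h hdet)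
  exact hunit.mul_left_eq_zero.1 key

theorem stmt_5 (n : ℕ) (hn : 3 ≤ n) (hodd : Odd n)
    (A : Matrix (Fin 2) (Fin 2) ℝ) (h : A ^ n = -1) (hne : A ≠ -1) :
    ∑ j ∈ Finset.range n, ((-1 : ℝ) ^ j) • A ^ (n - 1 - j) = 0 :=
  stmt_5_general n hodd A h hne
end

section
/- Let n ≥ 3 be odd, a > 0 a real number, and A ∈ M_2(ℝ) with A^n = a·I and A ≠ a^{1/n}·I. Then A^{n-1} + a^{1/n} A^{n-2} + a^{2/n} A^{n-3} + ... + a^{(n-2)/n} A + a^{(n-1)/n} I = 0. -/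
open Matrix Finset

lemma ch2 (A : Matrix (Fin 2) (Fin 2) ℝ) :
    A * A = (Matrix.trace A) • A - (Matrix.det A) • 1 := by
  ext i j
  fin_cases i <;> fin_cases j <;>
    simp [Matrix.mul_apply, Fin.sum_univ_two, Matrix.trace_fin_two,
      Matrix.det_fin_two, Matrix.one_apply] <;> ring

lemma det2 (b : ℝ) (A : Matrix (Fin 2) (Fin 2) ℝ) :
    Matrix.det (b • (1 : Matrix (Fin 2) (Fin 2) ℝ) - A)
      = b ^ 2 - Matrix.trace A * b + Matrix.det A := by
  simp [Matrix.det_fin_two, Matrix.trace_fin_two, Matrix.one_apply]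
  ring

lemma pow_formula (b : ℝ) (A : Matrix (Fin 2) (Fin 2) ℝ)
    (hA2 : A * A = (2 * b) • A - (b ^ 2) • 1) (k : ℕ) :
    A ^ (k + 1) = (((k : ℝ) + 1) * b ^ k) • A - ((k : ℝ) * b ^ (k + 1)) • 1 := by
  induction k with
  | zero => simp
  | succ m ih =>
    rw [pow_succ, ih, sub_mul, smul_mul_assoc, smul_mul_assoc, hA2, one_mul]
    push_cast
    module

theorem stmt_6 (n : ℕ) (hn : 3 ≤ n) (hodd : Odd n) (a : ℝ) (ha : 0 < a)
    (A : Matrix (Fin 2) (Fin 2) ℝ)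
    (h : A ^ n = a • (1 : Matrix (Fin 2) (Fin 2) ℝ))
    (hne : A ≠ (a ^ ((1 : ℝ) / n)) • (1 : Matrix (Fin 2) (Fin 2) ℝ)) :
    ∑ j ∈ Finset.range n, (a ^ ((j : ℝ) / n)) • A ^ (n - 1 - j) = 0 := by
  have hn0 : (n : ℝ) ≠ 0 := by positivity
  set b : ℝ := a ^ ((1 : ℝ) / n) with hb
  have hbpos : 0 < b := Real.rpow_pos_of_pos ha _
  have hbn : b ^ n = a := by
    rw [hb, ← Real.rpow_natCast (a ^ ((1:ℝ)/n)) n, ← Real.rpow_mul ha.le]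
    rw [one_div, inv_mul_cancel₀ hn0, Real.rpow_one]
  have hpow : ∀ j : ℕ, a ^ ((j : ℝ) / n) = b ^ j := by
    intro j
    rw [hb, ← Real.rpow_natCast (a ^ ((1:ℝ)/n)) j, ← Real.rpow_mul ha.le]
    congr 1; field_simp
  -- rewrite the sum
  have hsum : ∑ j ∈ Finset.range n, (a ^ ((j : ℝ) / n)) • A ^ (n - 1 - j)
      = ∑ j ∈ Finset.range n,
          (b • (1 : Matrix (Fin 2) (Fin 2) ℝ)) ^ j * A ^ (n - 1 - j) := by
    apply Finset.sum_congr rfl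
    intro j _
    rw [hpow j, smul_pow, one_pow, smul_mul_assoc, one_mul]
  rw [hsum]
  have hcomm : Commute (b • (1 : Matrix (Fin 2) (Fin 2) ℝ)) A := by
    simp [Commute, SemiconjBy]
  have key : (∑ j ∈ Finset.range n,
      (b • (1 : Matrix (Fin 2) (Fin 2) ℝ)) ^ j * A ^ (n - 1 - j)) *
      (b • (1 : Matrix (Fin 2) (Fin 2) ℝ) - A) = 0 := by
    rw [hcomm.geom_sum₂_mul, h, smul_pow, one_pow, hbn, sub_self]
  -- determinant of A
  have hdetA : Matrix.det A = b ^ 2 := by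
    have h1 : (Matrix.det A) ^ n = (b ^ 2) ^ n := by
      have h2 : Matrix.det (A ^ n) = a ^ 2 := by
        rw [h]; simp [Fintype.card_fin]
      rw [Matrix.det_pow] at h2
      rw [h2, ← pow_mul, mul_comm 2 n, pow_mul, hbn]
    exact hodd.strictMono_pow.injective h1
  by_cases hdet : Matrix.det (b • (1 : Matrix (Fin 2) (Fin 2) ℝ) - A) = 0
  · -- b is an eigenvalue: trace = 2b, (A - b)² = 0, forces A = b•1, contradiction
    exfalso
    rw [det2, hdetA] at hdet
    have htr : Matrix.trace A = 2 * b := by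
      have : b * (2 * b - Matrix.trace A) = 0 := by ring_nf; ring_nf at hdet; linarith
      rcases mul_eq_zero.mp this with h' | h'
      · exact absurd h' hbpos.ne'
      · linarith
    have hA2 : A * A = (2 * b) • A - (b ^ 2) • 1 := by
      rw [ch2, htr, hdetA]
    obtain ⟨m, hm⟩ : ∃ m, n = m + 1 := ⟨n - 1, by omega⟩
    have hAn := pow_formula b A hA2 m
    rw [← hm, h] at hAn
    have hm0 : ((m : ℝ) + 1) * b ^ m ≠ 0 := by positivity
    have hA : A = b • 1 := by
      have e1 : (((m : ℝ) + 1) * b ^ m) • A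
          = (((m : ℝ) + 1) * b ^ m) • (b • (1 : Matrix (Fin 2) (Fin 2) ℝ)) := by
        rw [eq_sub_iff_add_eq] at hAn
        rw [← hAn, ← hbn, hm]
        module
      exact smul_right_injective _ hm0 e1
    exact hne (by rw [hA, hb])
  · -- b•1 - A invertible
    have hunit : IsUnit (b • (1 : Matrix (Fin 2) (Fin 2) ℝ) - A) := by
      rw [Matrix.isUnit_iff_isUnit_det]
      exact isUnit_iff_ne_zero.mpr hdet
    exact (IsUnit.mul_left_eq_zero hunit).mp key
end
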